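/- arXiv:math/0305180 — 4 statements merged into one kernel-verified Lean document; each statement's English description precedes it below -/
import Mathlib

section
/- For all l, i ∈ {1,…,n−1} and every m ∈ ℕ, the operators on A satisfy the commutator identity [d_l, η_i^m] = m · δ_{l,i} · η_i^{m−1} ∘ ((1−m)·id + ζ_i), where δ_{l,i} is the Kronecker delta (and for m = 0 both sides are 0). -/
open MvPolynomial LieAlgebra LieAlgebra.SpecialLinear

/-- Index set for the variables `x_{i,j}`, `1 ≤ j < i ≤ n`. -/
abbrev XIdx (n : ℕ) := {p : ℕ × ℕ // 1 ≤ p.2 ∧ p.2 < p.1 ∧ p.1 ≤ n}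

/-- The polynomial algebra `A = ℂ[x_{i,j} : 1 ≤ j < i ≤ n]`. -/
abbrev PolyA (n : ℕ) := MvPolynomial (XIdx n) ℂ

/-- Multiplication by `x_{i,j}` as a linear operator on `A`. -/
noncomputable def mulX (n i j : ℕ) : Module.End ℂ (PolyA n) :=
  if h : 1 ≤ j ∧ j < i ∧ i ≤ n then
    LinearMap.mulLeft ℂ (X (⟨(i, j), h⟩ : XIdx n)) else 0

/-- Partial derivative `∂_{i,j}` as a linear operator on `A`. -/
noncomputable def pd (n i j : ℕ) : Module.End ℂ (PolyA n) :=
  if h : 1 ≤ j ∧ j < i ∧ i ≤ n then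
    (pderiv (⟨(i, j), h⟩ : XIdx n)).toLinearMap else 0

/-- The operator `d_i`. -/
noncomputable def dOp (n : ℕ) (lam : ℕ → ℂ) (i : ℕ) : Module.End ℂ (PolyA n) :=
  (lam i • (1 : Module.End ℂ (PolyA n))
      - ∑ j ∈ Finset.Icc (i+1) n, mulX n j i * pd n j i
      + ∑ j ∈ Finset.Icc (i+2) n, mulX n j (i+1) * pd n j (i+1)) * pd n (i+1) i
    + ∑ j ∈ Finset.Icc 1 (i-1), mulX n i j * pd n (i+1) j
    - ∑ j ∈ Finset.Icc (i+2) n, mulX n j (i+1) * pd n j i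

/-- The operator `η_i`. -/
noncomputable def etaOp (n : ℕ) (i : ℕ) : Module.End ℂ (PolyA n) :=
  mulX n (i+1) i + ∑ j ∈ Finset.Icc 1 (i-1), mulX n (i+1) j * pd n i j

/-- The operator `ζ_i`. -/
noncomputable def zetaOp (n : ℕ) (lam : ℕ → ℂ) (i : ℕ) : Module.End ℂ (PolyA n) :=
  lam i • (1 : Module.End ℂ (PolyA n))
    + ∑ p ∈ Finset.Icc 1 (i-1), (mulX n i p * pd n i p - mulX n (i+1) p * pd n (i+1) p)
    + ∑ j ∈ Finset.Icc (i+2) n, (mulX n j (i+1) * pd n j (i+1) - mulX n j i * pd n j i)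
    - (2 : ℂ) • (mulX n (i+1) i * pd n (i+1) i)

/-- The matrix unit `E_{i,j}` (1-based indices) as an element of `sl(n,ℂ)`. -/
noncomputable def slE (n i j : ℕ) : sl (Fin n) ℂ :=
  if h : i ≠ j ∧ 1 ≤ i ∧ i ≤ n ∧ 1 ≤ j ∧ j ≤ n then
    have hi : i - 1 < n := by omega
    have hj : j - 1 < n := by omega
    LieAlgebra.SpecialLinear.single (⟨i - 1, hi⟩ : Fin n) (⟨j - 1, hj⟩ : Fin n)
      (by simp only [ne_eq, Fin.mk.injEq]; omega) (1 : ℂ)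
  else 0

/-- `h_i = E_{i,i} - E_{i+1,i+1}` (1-based index) as an element of `sl(n,ℂ)`. -/
noncomputable def slH (n i : ℕ) : sl (Fin n) ℂ :=
  if h : 1 ≤ i ∧ i + 1 ≤ n then
    have hi : i - 1 < n := by omega
    have hi' : i < n := by omega
    ⟨Matrix.single (⟨i - 1, hi⟩ : Fin n) (⟨i - 1, hi⟩ : Fin n) (1 : ℂ)
        - Matrix.single (⟨i, hi'⟩ : Fin n) (⟨i, hi'⟩ : Fin n) (1 : ℂ),
      LinearMap.mem_ker.2 (by simp)⟩
  else 0

/-!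
Write `E_{ab} = x_{ab} ∂_{ab}`. Then `d_l = A_l ∂_{l+1,l} + R_l - S_l`, where
`A_l = λ_l - ∑_j E_{j,l} + ∑_j E_{j,l+1}` is a combination of Euler operators and `R_l`, `S_l` are
sums of first-order operators `x_a ∂_b`. An Euler-type operator `W` acts on every variable by a
weight, `[W, x_a] = w(a) x_a` and `[W, ∂_a] = -w(a) ∂_a`, so its bracket with `η_i` is read off
from the weights; the other brackets follow from `[∂_a, x_b] = δ_{ab}`. Together this gives
`[d_l, η_i] = δ_{l,i} ζ_i`. Moreover `ζ_i - λ_i` gives `x_{ab}` the weight `⟨ε_a - ε_b, h_i⟩`, so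
`[ζ_i, η_i] = -2 η_i`: the triple `(d_i, η_i, ζ_i)` satisfies the `sl₂` relations needed for the
usual induction computing `[d_i, η_i^m]`, while for `l ≠ i` the operator `d_l` commutes with `η_i`.
-/

attribute [local instance 100] LieRing.ofAssociativeRing

theorem MvPolynomial.pderiv_pderiv_comm {σ R : Type*} [CommSemiring R] (i j : σ)
    (p : MvPolynomial σ R) : pderiv i (pderiv j p) = pderiv j (pderiv i p) := by
  classical
  induction p using MvPolynomial.induction_on with
  | C a => simp
  | add p q hp hq => simp [hp, hq]
  | mul_X p k hp =>
      simp only [pderiv_mul, pderiv_X, map_add, hp, Pi.single_apply, apply_ite (pderiv i),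
        apply_ite (pderiv j), pderiv_one, map_zero, ite_self]
      ring

section LieOfAssociative

variable {A : Type*} [Ring A]

theorem Ring.lie_mul (a b c : A) : ⁅a, b * c⁆ = ⁅a, b⁆ * c + b * ⁅a, c⁆ := by
  simp only [Ring.lie_def, sub_mul, mul_sub, mul_assoc]; abel

theorem Ring.mul_lie (a b c : A) : ⁅a * b, c⁆ = a * ⁅b, c⁆ + ⁅a, c⁆ * b := by
  simp only [Ring.lie_def, sub_mul, mul_sub, mul_assoc]; abel

end LieOfAssociative

section Sl2

variable {K R : Type*} [CommRing K] [Ring R] [Algebra K R] {d e z : R}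

theorem lie_pow_succ_of_lie_eq (hde : ⁅d, e⁆ = z) (hze : ⁅z, e⁆ = -(2 : K) • e) (m : ℕ) :
    ⁅d, e ^ (m + 1)⁆ = ((m : K) + 1) • (e ^ m * (z - (m : K) • 1)) := by
  have hze' : z * e = e * z - (2 : K) • e := by
    rw [Ring.lie_def] at hze; rw [← sub_eq_zero, ← sub_add, hze]; module
  induction m with
  | zero => simpa using hde
  | succ m ih =>
    rw [pow_succ, Ring.lie_mul, ih, hde, smul_mul_assoc, mul_assoc, sub_mul, hze',
      smul_mul_assoc, one_mul, mul_sub, mul_sub, mul_smul_comm, mul_smul_comm, ← mul_assoc,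
      ← pow_succ]
    simp only [mul_sub, mul_smul_comm, mul_one]
    push_cast
    module

theorem lie_pow_of_lie_eq (hde : ⁅d, e⁆ = z) (hze : ⁅z, e⁆ = -(2 : K) • e) (m : ℕ) :
    ⁅d, e ^ m⁆ = (m : K) • (e ^ (m - 1) * ((1 - (m : K)) • 1 + z)) := by
  rcases m with _ | m
  · simp [Ring.lie_def]
  · rw [lie_pow_succ_of_lie_eq hde hze, Nat.add_sub_cancel]
    push_cast
    congr 2
    module

end Sl2

section Operators

variable {n : ℕ}

theorem commute_pd_pd (a b c d : ℕ) : Commute (pd n a b) (pd n c d) := by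
  unfold pd
  split_ifs
  · exact LinearMap.ext fun p => pderiv_pderiv_comm _ _ p
  all_goals simp

theorem commute_mulX_mulX (a b c d : ℕ) : Commute (mulX n a b) (mulX n c d) := by
  unfold mulX
  split_ifs
  · exact LinearMap.ext fun p => by simp only [Module.End.mul_apply, LinearMap.mulLeft_apply]; ring
  all_goals simp

theorem lie_pd_pd (a b c d : ℕ) : ⁅pd n a b, pd n c d⁆ = 0 :=
  (commute_pd_pd a b c d).lie_eq

theorem lie_mulX_mulX (a b c d : ℕ) : ⁅mulX n a b, mulX n c d⁆ = 0 :=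
  (commute_mulX_mulX a b c d).lie_eq

theorem lie_pd_mulX {a b : ℕ} (hab : 1 ≤ b ∧ b < a ∧ a ≤ n) (c d : ℕ) :
    ⁅pd n a b, mulX n c d⁆ = if a = c ∧ b = d then 1 else 0 := by
  unfold pd mulX
  rw [dif_pos hab]
  split_ifs with hcd h h
  · refine LinearMap.ext fun p => ?_
    simp [Ring.lie_def, pderiv_X, h.1, h.2]
  · refine LinearMap.ext fun p => ?_
    have hne : (⟨(c, d), hcd⟩ : XIdx n) ≠ ⟨(a, b), hab⟩ := fun he => h (by simp_all)
    simp [Ring.lie_def, pderiv_X_of_ne hne]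
  · obtain ⟨rfl, rfl⟩ := h
    exact absurd hab hcd
  · simp [Ring.lie_def]

theorem pd_mul_mulX_mul {a b : ℕ} (hab : 1 ≤ b ∧ b < a ∧ a ≤ n) (c d : ℕ)
    (T : Module.End ℂ (PolyA n)) :
    pd n a b * (mulX n c d * T) = mulX n c d * (pd n a b * T) + if a = c ∧ b = d then T else 0 := by
  have h := lie_pd_mulX hab c d
  rw [Ring.lie_def, sub_eq_iff_eq_add'] at h
  rw [← mul_assoc, h, add_mul, mul_assoc]
  split_ifs <;> simp

theorem lie_mulX_mul_pd_mulX {c d : ℕ} (hcd : 1 ≤ d ∧ d < c ∧ c ≤ n) (a b e f : ℕ) :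
    ⁅mulX n a b * pd n c d, mulX n e f⁆ = if c = e ∧ d = f then mulX n a b else 0 := by
  rw [Ring.mul_lie, lie_pd_mulX hcd, lie_mulX_mulX]
  split_ifs <;> simp

theorem lie_pd_mulX_mul_pd {a b : ℕ} (hab : 1 ≤ b ∧ b < a ∧ a ≤ n) (c d e f : ℕ) :
    ⁅pd n a b, mulX n c d * pd n e f⁆ = if a = c ∧ b = d then pd n e f else 0 := by
  rw [Ring.lie_mul, lie_pd_mulX hab, lie_pd_pd]
  split_ifs <;> simp

theorem lie_mulX_mul_pd_mulX_mul_pd {c d g h : ℕ} (hcd : 1 ≤ d ∧ d < c ∧ c ≤ n)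
    (hgh : 1 ≤ h ∧ h < g ∧ g ≤ n) (a b e f : ℕ) :
    ⁅mulX n a b * pd n c d, mulX n e f * pd n g h⁆ =
      (if c = e ∧ d = f then mulX n a b * pd n g h else 0) -
        if g = a ∧ h = b then mulX n e f * pd n c d else 0 := by
  rw [Ring.lie_def, mul_assoc, pd_mul_mulX_mul hcd, mul_assoc, pd_mul_mulX_mul hgh]
  simp only [mul_add, ← mul_assoc, (commute_mulX_mulX a b e f).eq]
  rw [mul_assoc (mulX n e f * mulX n a b) (pd n g h), (commute_pd_pd g h c d).eq, ← mul_assoc]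
  simp only [mul_ite, mul_zero]
  abel

structure IsWeightOp (W : Module.End ℂ (PolyA n)) (w : ℕ → ℕ → ℂ) : Prop where
  lie_mulX (a b : ℕ) : ⁅W, mulX n a b⁆ = w a b • mulX n a b
  lie_pd (a b : ℕ) : ⁅W, pd n a b⁆ = -w a b • pd n a b

namespace IsWeightOp

variable {W W' : Module.End ℂ (PolyA n)} {w w' : ℕ → ℕ → ℂ}

theorem smul_one (c : ℂ) : IsWeightOp (c • 1 : Module.End ℂ (PolyA n)) 0 where
  lie_mulX a b := by simp [Ring.lie_def]
  lie_pd a b := by simp [Ring.lie_def]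

theorem add (hW : IsWeightOp W w) (hW' : IsWeightOp W' w') :
    IsWeightOp (W + W') (fun a b => w a b + w' a b) where
  lie_mulX a b := by rw [add_lie, hW.lie_mulX, hW'.lie_mulX]; module
  lie_pd a b := by rw [add_lie, hW.lie_pd, hW'.lie_pd]; module

theorem sub (hW : IsWeightOp W w) (hW' : IsWeightOp W' w') :
    IsWeightOp (W - W') (fun a b => w a b - w' a b) where
  lie_mulX a b := by rw [sub_lie, hW.lie_mulX, hW'.lie_mulX]; module
  lie_pd a b := by rw [sub_lie, hW.lie_pd, hW'.lie_pd]; module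

theorem smul (hW : IsWeightOp W w) (c : ℂ) : IsWeightOp (c • W) (fun a b => c * w a b) where
  lie_mulX a b := (smul_lie c W _).trans (by rw [hW.lie_mulX, smul_smul])
  lie_pd a b := (smul_lie c W _).trans (by rw [hW.lie_pd, smul_smul, mul_neg])

theorem sum {ι : Type*} {s : Finset ι} {W : ι → Module.End ℂ (PolyA n)} {w : ι → ℕ → ℕ → ℂ}
    (hW : ∀ j ∈ s, IsWeightOp (W j) (w j)) :
    IsWeightOp (∑ j ∈ s, W j) (fun a b => ∑ j ∈ s, w j a b) where
  lie_mulX a b := by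
    rw [sum_lie, Finset.sum_smul]
    exact Finset.sum_congr rfl fun j hj => (hW j hj).lie_mulX a b
  lie_pd a b := by
    rw [sum_lie, ← Finset.sum_neg_distrib, Finset.sum_smul]
    exact Finset.sum_congr rfl fun j hj => (hW j hj).lie_pd a b

theorem of_valid
    (h₁ : ∀ a b, 1 ≤ b → b < a → a ≤ n → ⁅W, mulX n a b⁆ = w a b • mulX n a b)
    (h₂ : ∀ a b, 1 ≤ b → b < a → a ≤ n → ⁅W, pd n a b⁆ = -w a b • pd n a b) :
    IsWeightOp W w where
  lie_mulX a b := by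
    by_cases hab : 1 ≤ b ∧ b < a ∧ a ≤ n
    · exact h₁ a b hab.1 hab.2.1 hab.2.2
    · simp [mulX, hab, Ring.lie_def]
  lie_pd a b := by
    by_cases hab : 1 ≤ b ∧ b < a ∧ a ≤ n
    · exact h₂ a b hab.1 hab.2.1 hab.2.2
    · simp [pd, hab, Ring.lie_def]

theorem congr (hW : IsWeightOp W w) (h : ∀ a b, 1 ≤ b → b < a → a ≤ n → w a b = w' a b) :
    IsWeightOp W w' :=
  of_valid (fun a b h₁ h₂ h₃ => by rw [hW.lie_mulX, h a b h₁ h₂ h₃])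
    (fun a b h₁ h₂ h₃ => by rw [hW.lie_pd, h a b h₁ h₂ h₃])

theorem lie_mulX_mul_pd (hW : IsWeightOp W w) (a b c d : ℕ) :
    ⁅W, mulX n a b * pd n c d⁆ = (w a b - w c d) • (mulX n a b * pd n c d) := by
  rw [Ring.lie_mul, hW.lie_mulX, hW.lie_pd, smul_mul_assoc, mul_smul_comm]
  module

theorem lie_etaOp (hW : IsWeightOp W w) (i : ℕ) :
    ⁅W, etaOp n i⁆ = w (i + 1) i • mulX n (i + 1) i +
      ∑ k ∈ Finset.Icc 1 (i - 1), (w (i + 1) k - w i k) • (mulX n (i + 1) k * pd n i k) := by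
  simp only [etaOp, lie_add, lie_sum, hW.lie_mulX, hW.lie_mulX_mul_pd]

end IsWeightOp

theorem isWeightOp_mulX_mul_pd (c d : ℕ) :
    IsWeightOp (mulX n c d * pd n c d) (fun a b => if a = c ∧ b = d then 1 else 0) := by
  by_cases hcd : 1 ≤ d ∧ d < c ∧ c ≤ n
  · refine .of_valid (fun a b _ _ _ => ?_) (fun a b h₁ h₂ h₃ => ?_)
    · rw [lie_mulX_mul_pd_mulX hcd]
      by_cases h : a = c ∧ b = d
      · obtain ⟨rfl, rfl⟩ := h
        simp
      · rw [if_neg h, if_neg fun h' => h ⟨h'.1.symm, h'.2.symm⟩, zero_smul]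
    · rw [← lie_skew, lie_pd_mulX_mul_pd ⟨h₁, h₂, h₃⟩]
      by_cases h : a = c ∧ b = d
      · obtain ⟨rfl, rfl⟩ := h
        simp only [and_self, if_true]
        module
      · simp [h]
  · refine .of_valid (fun a b h₁ h₂ h₃ => ?_) (fun a b h₁ h₂ h₃ => ?_)
    all_goals
      rw [if_neg (by rintro ⟨rfl, rfl⟩; exact hcd ⟨h₁, h₂, h₃⟩)]
      simp [mulX, hcd, Ring.lie_def]

theorem isWeightOp_sum_column (m : ℕ) :
    IsWeightOp (∑ j ∈ Finset.Icc (m + 1) n, mulX n j m * pd n j m)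
      (fun _ b => if b = m then 1 else 0) := by
  refine (IsWeightOp.sum fun j _ => isWeightOp_mulX_mul_pd j m).congr fun a b h₁ h₂ h₃ => ?_
  by_cases hb : b = m
  · subst hb
    simp [h₂, h₃]
  · simp [hb]

theorem isWeightOp_zetaOp (lam : ℕ → ℂ) (i : ℕ) :
    IsWeightOp (zetaOp n lam i) (fun a b =>
      ((if a = i then 1 else 0) - (if a = i + 1 then 1 else 0)) -
        ((if b = i then 1 else 0) - (if b = i + 1 then 1 else 0))) := by
  refine (((IsWeightOp.smul_one (lam i)).add (IsWeightOp.sum fun p _ =>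
    (isWeightOp_mulX_mul_pd i p).sub (isWeightOp_mulX_mul_pd (i + 1) p))).add
    (IsWeightOp.sum fun j _ =>
    (isWeightOp_mulX_mul_pd j (i + 1)).sub (isWeightOp_mulX_mul_pd j i))).sub
    ((isWeightOp_mulX_mul_pd (i + 1) i).smul 2) |>.congr fun a b h₁ h₂ h₃ => ?_
  simp only [Pi.zero_apply, zero_add, Finset.sum_sub_distrib, ite_and, Finset.sum_ite_irrel,
    Finset.sum_ite_eq, Finset.sum_const_zero, Finset.mem_Icc]
  split_ifs <;> first | omega | norm_num

theorem lie_zetaOp_etaOp (lam : ℕ → ℂ) (i : ℕ) :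
    ⁅zetaOp n lam i, etaOp n i⁆ = -(2 : ℂ) • etaOp n i := by
  rw [(isWeightOp_zetaOp lam i).lie_etaOp, etaOp, smul_add, Finset.smul_sum]
  congr 1
  · congr 1
    norm_num
  · refine Finset.sum_congr rfl fun k hk => ?_
    rw [Finset.mem_Icc] at hk
    congr 1
    simp [show k ≠ i by omega, show k ≠ i + 1 by omega]
    norm_num

theorem lie_pd_etaOp {l : ℕ} (hl : 1 ≤ l) (hln : l + 1 ≤ n) (i : ℕ) :
    ⁅pd n (l + 1) l, etaOp n i⁆ = if l = i then 1 else 0 := by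
  have hv : 1 ≤ l ∧ l < l + 1 ∧ l + 1 ≤ n := ⟨hl, l.lt_succ_self, hln⟩
  rw [etaOp, lie_add, lie_sum, lie_pd_mulX hv,
    Finset.sum_eq_zero fun k hk => by
      rw [lie_pd_mulX_mul_pd hv, if_neg (by rw [Finset.mem_Icc] at hk; omega)]]
  simp

theorem lie_mulX_mul_pd_etaOp {c d : ℕ} (hcd : 1 ≤ d ∧ d < c ∧ c ≤ n) (a b : ℕ) {i : ℕ}
    (hi : i ≤ n) :
    ⁅mulX n a b * pd n c d, etaOp n i⁆ =
      (if c = i + 1 ∧ d = i then mulX n a b else 0) +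
        ∑ k ∈ Finset.Icc 1 (i - 1),
          ((if c = i + 1 ∧ d = k then mulX n a b * pd n i k else 0) -
            if i = a ∧ k = b then mulX n (i + 1) k * pd n c d else 0) := by
  rw [etaOp, lie_add, lie_sum, lie_mulX_mul_pd_mulX hcd]
  congr 1
  refine Finset.sum_congr rfl fun k hk => ?_
  rw [Finset.mem_Icc] at hk
  exact lie_mulX_mul_pd_mulX_mul_pd hcd ⟨hk.1, by omega, hi⟩ a b _ _

theorem lie_sum_row_etaOp {l i : ℕ} (hln : l + 1 ≤ n) (hi : i ≤ n) :
    ⁅∑ j ∈ Finset.Icc 1 (l - 1), mulX n l j * pd n (l + 1) j, etaOp n i⁆ =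
      if l = i then
        ∑ j ∈ Finset.Icc 1 (i - 1), (mulX n i j * pd n i j - mulX n (i + 1) j * pd n (i + 1) j)
      else 0 := by
  rw [sum_lie]
  split_ifs with hli
  · subst hli
    refine Finset.sum_congr rfl fun j hj => ?_
    rw [Finset.mem_Icc] at hj
    rw [lie_mulX_mul_pd_etaOp ⟨hj.1, by omega, hln⟩ _ _ hi]
    simp [Finset.sum_sub_distrib, hj.1, hj.2, show j ≠ l by omega]
  · refine Finset.sum_eq_zero fun j hj => ?_
    rw [Finset.mem_Icc] at hj
    rw [lie_mulX_mul_pd_etaOp ⟨hj.1, by omega, hln⟩ _ _ hi]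
    simp [hli, Ne.symm hli]

theorem lie_sum_column_etaOp {l i : ℕ} (hl : 1 ≤ l) (hi : i + 1 ≤ n) :
    ⁅∑ j ∈ Finset.Icc (l + 2) n, mulX n j (l + 1) * pd n j l, etaOp n i⁆ =
      if l + 1 = i then mulX n (i + 1) (l + 1) * pd n i l else 0 := by
  rw [sum_lie, Finset.sum_congr rfl fun j hj => by
    obtain ⟨hj₁, hj₂⟩ := Finset.mem_Icc.mp hj
    rw [lie_mulX_mul_pd_etaOp ⟨hl, by omega, hj₂⟩ _ _ (by omega), if_neg (by omega), zero_add]]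
  simp only [Finset.sum_sub_distrib, ite_and, Finset.sum_ite_irrel, Finset.sum_ite_eq,
    Finset.sum_ite_eq', Finset.sum_const_zero, Finset.mem_Icc]
  split_ifs <;> first | omega | simp

theorem lie_dOp_etaOp (lam : ℕ → ℂ) {l i : ℕ} (hl : 1 ≤ l) (hln : l + 1 ≤ n) (hi : i + 1 ≤ n) :
    ⁅dOp n lam l, etaOp n i⁆ = if l = i then zetaOp n lam i else 0 := by
  have hA := ((IsWeightOp.smul_one (lam l)).sub (isWeightOp_sum_column (n := n) l)).add
    (isWeightOp_sum_column (l + 1))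
  rw [dOp, sub_lie, add_lie, Ring.mul_lie, lie_pd_etaOp hl hln, hA.lie_etaOp,
    lie_sum_row_etaOp hln (by omega), lie_sum_column_etaOp hl hi]
  simp only [Pi.zero_apply, zero_sub, sub_self, zero_smul, Finset.sum_const_zero, add_zero]
  rcases eq_or_ne l i with rfl | hli
  · have hsplit : ∑ j ∈ Finset.Icc (l + 1) n, mulX n j l * pd n j l =
        mulX n (l + 1) l * pd n (l + 1) l + ∑ j ∈ Finset.Icc (l + 2) n, mulX n j l * pd n j l := by
      rw [← Finset.insert_Icc_add_one_left_eq_Icc hln, Finset.sum_insert (by simp)]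
      rfl
    simp only [if_true, mul_one, l.succ_ne_self, (l.succ_ne_self).symm, if_false, hsplit, zetaOp,
      Finset.sum_sub_distrib, smul_mul_assoc]
    module
  · by_cases hli' : l + 1 = i
    · subst hli'
      simp
    · simp [hli, Ne.symm hli, hli', Ne.symm hli']

end Operators

theorem statement1_general (n : ℕ) (lam : ℕ → ℂ)
    (l i : ℕ) (hl1 : 1 ≤ l) (hl2 : l ≤ n - 1) (hi1 : 1 ≤ i) (hi2 : i ≤ n - 1) (m : ℕ) :
    dOp n lam l * etaOp n i ^ m - etaOp n i ^ m * dOp n lam l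
      = (m : ℂ) • (if l = i then (1 : ℂ) else 0) •
          (etaOp n i ^ (m - 1) *
            ((1 - (m : ℂ)) • (1 : Module.End ℂ (PolyA n)) + zetaOp n lam i)) := by
  have hd := lie_dOp_etaOp lam hl1 (by omega : l + 1 ≤ n) (by omega : i + 1 ≤ n)
  rw [← Ring.lie_def]
  split_ifs at hd ⊢ with hli
  · subst hli
    rw [one_smul]
    exact lie_pow_of_lie_eq hd (lie_zetaOp_etaOp lam l) m
  · rw [zero_smul, smul_zero]
    exact ((commute_iff_lie_eq.mpr hd).pow_right m).lie_eq

/-- For `l, i ∈ {1,…,n-1}` and `m ∈ ℕ`: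
`[d_l, η_i^m] = m · δ_{l,i} · η_i^{m-1} ∘ ((1-m)·id + ζ_i)`. -/
theorem statement1 (n : ℕ) (hn : 2 ≤ n) (lam : ℕ → ℂ)
    (l i : ℕ) (hl1 : 1 ≤ l) (hl2 : l ≤ n - 1) (hi1 : 1 ≤ i) (hi2 : i ≤ n - 1) (m : ℕ) :
    dOp n lam l * etaOp n i ^ m - etaOp n i ^ m * dOp n lam l
      = (m : ℂ) • (if l = i then (1 : ℂ) else 0) •
          (etaOp n i ^ (m - 1) *
            ((1 - (m : ℂ)) • (1 : Module.End ℂ (PolyA n)) + zetaOp n lam i)) :=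
  statement1_general n lam l i hl1 hl2 hi1 hi2 m
end

section
/- For every i with 1 ≤ i ≤ n−2 and all a, b ∈ ℕ, the operators on A satisfy the exchange relation η_i^a ∘ η_{i+1}^{a+b} ∘ η_i^b = η_{i+1}^b ∘ η_i^{a+b} ∘ η_{i+1}^a. -/
/-!
The operators `E_{r,c} = x_{r,c} + ∑_{j<c} x_{r,j} ∂_{c,j}` (`elemOp n r c`) satisfy the
commutation relations of the matrix units of `gl_n`, and `η_i = E_{i+1,i}`. Hence
`z := ⁅η_{i+1}, η_i⁆ = E_{i+2,i}`, and `z` commutes with `η_i` and `η_{i+1}`.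
In any ring in which `z = ⁅y, x⁆` commutes with `x` and `y`, moving the `y`'s to the right gives
`y ^ m * x ^ k = ∑ j, C(m, j) k(k-1)⋯(k-j+1) • x ^ (k-j) * y ^ (m-j) * z ^ j`,
and both sides of the exchange relation expand to
`∑ j, j! C(a+b, j) C(b, j) • x ^ (a+b-j) * y ^ (a+b-j) * z ^ j`.
-/

open MvPolynomial LieAlgebra LieAlgebra.SpecialLinear

open Finset

section Exchange
variable {R : Type*} [Ring R] {x y z : R}

theorem mul_pow_eq_pow_mul_add (hzx : Commute z x) (hyx : y * x = x * y + z) :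
    ∀ k : ℕ, y * x ^ k = x ^ k * y + k • (x ^ (k - 1) * z)
  | 0 => by simp
  | k + 1 => by
    calc y * x ^ (k + 1) = (y * x ^ k) * x := by rw [pow_succ, mul_assoc]
      _ = x ^ k * (y * x) + k • (x ^ (k - 1) * (z * x)) := by
        rw [mul_pow_eq_pow_mul_add hzx hyx k, add_mul, smul_mul_assoc]; simp only [mul_assoc]
      _ = x ^ (k + 1) * y + (k + 1) • (x ^ k * z) := by
        rw [hyx, hzx.eq, mul_add, succ_nsmul, ← mul_assoc, ← pow_succ]
        rcases k with _ | k
        · simp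
        · rw [← mul_assoc, ← pow_succ, Nat.add_sub_cancel]; abel

theorem mul_pow_mul_pow_mul_pow (hzx : Commute z x) (hzy : Commute z y)
    (hyx : y * x = x * y + z) (p q j : ℕ) :
    y * (x ^ p * y ^ q * z ^ j)
      = x ^ p * y ^ (q + 1) * z ^ j + p • (x ^ (p - 1) * y ^ q * z ^ (j + 1)) := by
  calc y * (x ^ p * y ^ q * z ^ j) = (y * x ^ p) * (y ^ q * z ^ j) := by simp only [mul_assoc]
    _ = x ^ p * (y * y ^ q) * z ^ j + p • (x ^ (p - 1) * ((z * y ^ q) * z ^ j)) := by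
      rw [mul_pow_eq_pow_mul_add hzx hyx, add_mul, smul_mul_assoc]; simp only [mul_assoc]
    _ = x ^ p * y ^ (q + 1) * z ^ j + p • (x ^ (p - 1) * y ^ q * z ^ (j + 1)) := by
      rw [← pow_succ', (hzy.pow_right q).eq, pow_succ' z j]; simp only [mul_assoc]

theorem pow_mul_pow_eq_sum (hzx : Commute z x) (hzy : Commute z y)
    (hyx : y * x = x * y + z) (k : ℕ) : ∀ m : ℕ,
    y ^ m * x ^ k = ∑ j ∈ range (m + 1),
      (m.choose j * k.descFactorial j) • (x ^ (k - j) * y ^ (m - j) * z ^ j)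
  | 0 => by simp
  | m + 1 => by
    set T : ℕ → R := fun j => x ^ (k - j) * y ^ (m + 1 - j) * z ^ j
    have hstep : ∀ j ∈ range (m + 1), y * (x ^ (k - j) * y ^ (m - j) * z ^ j)
        = T j + (k - j) • T (j + 1) := by
      intro j hj
      have hjm : m - j + 1 = m + 1 - j := by grind
      rw [mul_pow_mul_pow_mul_pow hzx hzy hyx, hjm, Nat.sub_sub]
      simp only [T, Nat.add_sub_add_right]
    have hcoeff : ∀ j, (m + 1).choose (j + 1) * k.descFactorial (j + 1)
        = m.choose (j + 1) * k.descFactorial (j + 1)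
          + m.choose j * k.descFactorial j * (k - j) := by
      intro j; rw [Nat.choose_succ_succ', Nat.descFactorial_succ]; ring
    calc y ^ (m + 1) * x ^ k = y * (y ^ m * x ^ k) := by rw [pow_succ', mul_assoc]
      _ = ∑ j ∈ range (m + 1), (m.choose j * k.descFactorial j) • T j
          + ∑ j ∈ range (m + 1), (m.choose j * k.descFactorial j * (k - j)) • T (j + 1) := by
        rw [pow_mul_pow_eq_sum hzx hzy hyx k m, mul_sum, ← sum_add_distrib]
        refine sum_congr rfl fun j hj => ?_
        rw [mul_smul_comm, hstep j hj, smul_add, smul_smul]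
      _ = ∑ j ∈ range (m + 2), ((m + 1).choose j * k.descFactorial j) • T j := by
        have hext : ∑ j ∈ range (m + 1), (m.choose j * k.descFactorial j) • T j
            = ∑ j ∈ range (m + 2), (m.choose j * k.descFactorial j) • T j := by
          rw [sum_range_succ _ (m + 1), Nat.choose_succ_self, zero_mul, zero_smul, add_zero]
        rw [hext, sum_range_succ' _ (m + 1), sum_range_succ' _ (m + 1)]
        simp only [hcoeff, add_smul, sum_add_distrib, Nat.choose_zero_right]
        abel

theorem pow_mul_pow_mul_pow_exchange (hzx : Commute z x) (hzy : Commute z y)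
    (hyx : y * x = x * y + z) (a b : ℕ) :
    x ^ a * y ^ (a + b) * x ^ b = y ^ b * x ^ (a + b) * y ^ a := by
  set f : ℕ → R := fun j =>
    (j.factorial * (a + b).choose j * b.choose j) • (x ^ (a + b - j) * y ^ (a + b - j) * z ^ j)
  have hl : x ^ a * y ^ (a + b) * x ^ b = ∑ j ∈ range (b + 1), f j := by
    have hsub : range (b + 1) ⊆ range (a + b + 1) := range_subset_range.2 (by omega)
    rw [mul_assoc, pow_mul_pow_eq_sum hzx hzy hyx, mul_sum, ← sum_subset hsub]
    · refine sum_congr rfl fun j hj => ?_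
      have hjb : a + (b - j) = a + b - j := by grind
      rw [mul_smul_comm, Nat.descFactorial_eq_factorial_mul_choose]
      simp only [f, ← mul_assoc, ← pow_add, hjb]
      ring_nf
    · intro j _ hj
      rw [(Nat.descFactorial_eq_zero_iff_lt).2 (by grind), mul_zero, zero_smul, mul_zero]
  have hr : y ^ b * x ^ (a + b) * y ^ a = ∑ j ∈ range (b + 1), f j := by
    rw [pow_mul_pow_eq_sum hzx hzy hyx, sum_mul]
    refine sum_congr rfl fun j hj => ?_
    have hjb : b - j + a = a + b - j := by grind
    rw [smul_mul_assoc, Nat.descFactorial_eq_factorial_mul_choose, mul_assoc _ (z ^ j),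
      (hzy.pow_pow j a).eq, mul_assoc (x ^ _), ← mul_assoc (y ^ (b - j)), ← pow_add, hjb]
    simp only [f, mul_assoc]
    ring_nf
  rw [hl, hr]
end Exchange

theorem mul_lie_of_commute {R : Type*} [Ring R] {a b c : R} (h : Commute a c) :
    ⁅a * b, c⁆ = a * ⁅b, c⁆ := by
  rw [Ring.lie_def, Ring.lie_def, mul_sub, mul_assoc, ← mul_assoc c, ← h.eq, mul_assoc]

theorem lie_mul_of_commute {R : Type*} [Ring R] {a b c : R} (h : Commute a c) :
    ⁅a, b * c⁆ = ⁅a, b⁆ * c := by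
  rw [Ring.lie_def, Ring.lie_def, sub_mul, mul_assoc b c a, ← h.eq, ← mul_assoc b, mul_assoc a]

theorem MvPolynomial.pderiv_comm {σ R : Type*} [CommSemiring R] (i j : σ)
    (f : MvPolynomial σ R) :
    pderiv i (pderiv j f) = pderiv j (pderiv i f) := by
  classical
  induction f using MvPolynomial.induction_on with
  | C a => simp
  | add f g hf hg => simp [hf, hg]
  | mul_X f s hf =>
    simp only [pderiv_mul, pderiv_X, map_add, hf, Pi.single_apply]
    split_ifs <;> simp [add_right_comm]

attribute [local instance] LieRing.ofAssociativeRing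

theorem mulX_commute_mulX (n i j k l : ℕ) : Commute (mulX n i j) (mulX n k l) := by
  unfold mulX
  split_ifs <;> first
    | exact Commute.zero_left _
    | exact Commute.zero_right _
    | exact LinearMap.ext fun f => mul_left_comm _ _ f

theorem pd_commute_pd (n i j k l : ℕ) : Commute (pd n i j) (pd n k l) := by
  unfold pd
  split_ifs <;> first
    | exact Commute.zero_left _
    | exact Commute.zero_right _
    | exact LinearMap.ext fun f => pderiv_comm _ _ f

theorem pd_commute_mulX {n i j k l : ℕ} (h : i ≠ k ∨ j ≠ l) :
    Commute (pd n i j) (mulX n k l) := by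
  unfold pd mulX
  split_ifs with hij hkl <;> first
    | exact Commute.zero_left _
    | exact Commute.zero_right _
    | refine LinearMap.ext fun f => ?_
      have hne : (⟨(k, l), hkl⟩ : XIdx n) ≠ ⟨(i, j), hij⟩ := by grind
      simp [Module.End.mul_apply, pderiv_X_of_ne hne]

theorem lie_pd_mulX_self {n i j : ℕ} (h : 1 ≤ j ∧ j < i ∧ i ≤ n) :
    ⁅pd n i j, mulX n i j⁆ = 1 := by
  unfold pd mulX
  rw [dif_pos h, dif_pos h, Ring.lie_def]
  refine LinearMap.ext fun f => ?_
  simp [Module.End.mul_apply]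

noncomputable def elemOp (n r c : ℕ) : Module.End ℂ (PolyA n) :=
  mulX n r c + ∑ j ∈ Icc 1 (c - 1), mulX n r j * pd n c j

theorem etaOp_eq_elemOp (n i : ℕ) : etaOp n i = elemOp n (i + 1) i := rfl

theorem elemOp_commute_mulX {n r c k : ℕ} (h : c ≠ k) (l : ℕ) :
    Commute (elemOp n r c) (mulX n k l) :=
  Commute.add_left (mulX_commute_mulX _ _ _ _ _) <| Commute.sum_left _ _ _ fun _ _ =>
    Commute.mul_left (mulX_commute_mulX _ _ _ _ _) (pd_commute_mulX (Or.inl h))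

theorem elemOp_commute_pd {n r c k : ℕ} (h : k ≠ r) (l : ℕ) :
    Commute (elemOp n r c) (pd n k l) :=
  Commute.add_left (pd_commute_mulX (Or.inl h)).symm <| Commute.sum_left _ _ _ fun _ _ =>
    Commute.mul_left (pd_commute_mulX (Or.inl h)).symm (pd_commute_pd _ _ _ _ _)

theorem elemOp_commute_elemOp {n r c r' c' : ℕ} (h : c ≠ r') (h' : c' ≠ r) :
    Commute (elemOp n r c) (elemOp n r' c') :=
  Commute.add_right (elemOp_commute_mulX h _) <| Commute.sum_right _ _ _ fun _ _ =>
    Commute.mul_right (elemOp_commute_mulX h _) (elemOp_commute_pd h' _)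

theorem lie_elemOp_mulX {n r c d : ℕ} (h : 1 ≤ d ∧ d < c ∧ c ≤ n) :
    ⁅elemOp n r c, mulX n c d⁆ = mulX n r d := by
  have hd : d ∈ Icc 1 (c - 1) := mem_Icc.2 ⟨h.1, by omega⟩
  rw [elemOp, add_lie, (mulX_commute_mulX n r c c d).lie_eq, zero_add, sum_lie,
    sum_eq_single_of_mem d hd]
  · rw [mul_lie_of_commute (mulX_commute_mulX n r d c d), lie_pd_mulX_self h, mul_one]
  · intro j _ hjd
    have hcomm : Commute (pd n c j) (mulX n c d) := pd_commute_mulX (Or.inr hjd)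
    rw [mul_lie_of_commute (mulX_commute_mulX n r j c d), hcomm.lie_eq, mul_zero]

theorem lie_elemOp_elemOp {n r c d : ℕ} (h : 1 ≤ d ∧ d < c ∧ c ≤ n) (hdr : d ≠ r) :
    ⁅elemOp n r c, elemOp n c d⁆ = elemOp n r d := by
  rw [elemOp.eq_1 n c d, lie_add, lie_elemOp_mulX h, lie_sum, elemOp.eq_1 n r d]
  congr 1
  refine sum_congr rfl fun k hk => ?_
  have hck : 1 ≤ k ∧ k < c ∧ c ≤ n := by simp only [mem_Icc] at hk; omega
  rw [lie_mul_of_commute (elemOp_commute_pd hdr k), lie_elemOp_mulX hck]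

theorem statement8_general (n : ℕ) (i : ℕ) (hi1 : 1 ≤ i) (hi2 : i ≤ n - 2) (a b : ℕ) :
    etaOp n i ^ a * etaOp n (i+1) ^ (a + b) * etaOp n i ^ b
      = etaOp n (i+1) ^ b * etaOp n i ^ (a + b) * etaOp n (i+1) ^ a := by
  simp only [etaOp_eq_elemOp]
  have hyx : elemOp n (i + 2) (i + 1) * elemOp n (i + 1) i
      = elemOp n (i + 1) i * elemOp n (i + 2) (i + 1) + elemOp n (i + 2) i := by
    rw [← sub_eq_iff_eq_add', ← Ring.lie_def]
    exact lie_elemOp_elemOp ⟨hi1, i.lt_succ_self, by omega⟩ (by omega)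
  exact pow_mul_pow_mul_pow_exchange (elemOp_commute_elemOp (by omega) (by omega))
    (elemOp_commute_elemOp (by omega) (by omega)) hyx a b

/-- Exchange relation: for `1 ≤ i ≤ n−2` and `a, b ∈ ℕ`,
`η_i^a ∘ η_{i+1}^{a+b} ∘ η_i^b = η_{i+1}^b ∘ η_i^{a+b} ∘ η_{i+1}^a`. -/
theorem statement8 (n : ℕ) (hn : 3 ≤ n) (i : ℕ) (hi1 : 1 ≤ i) (hi2 : i ≤ n - 2) (a b : ℕ) :
    etaOp n i ^ a * etaOp n (i+1) ^ (a + b) * etaOp n i ^ b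
      = etaOp n (i+1) ^ b * etaOp n i ^ (a + b) * etaOp n (i+1) ^ a :=
  statement8_general n i hi1 hi2 a b
end

section
/- In the universal enveloping algebra U(sl(n,ℂ)), for every i with 1 ≤ i ≤ n−2 and all a, b ∈ ℕ one has ι(E_{i+1,i})^a · ι(E_{i+2,i+1})^{a+b} · ι(E_{i+1,i})^b = ι(E_{i+2,i+1})^b · ι(E_{i+1,i})^{a+b} · ι(E_{i+2,i+1})^a. -/
/-!
Put `x = ι E_{i+1,i}`, `y = ι E_{i+2,i+1}` and `z = ⁅x, y⁆`. Since `E_{i+1,i}`, `E_{i+2,i+1}`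
and `E_{i+2,i}` span a Heisenberg algebra, `z` commutes with `x` and `y`, hence
`⁅x, y ^ (m + 1)⁆ = (m + 1) y ^ m z` and `⁅x ^ (m + 1), y⁆ = (m + 1) x ^ m z`. These show that
`L a b = x ^ a y ^ (a + b) x ^ b` and `R a b = y ^ b x ^ (a + b) y ^ a` obey the same recursion
`F a (b + 1) = F (a + 1) b - (a + b + 1) F a b z`, and `L a 0 = R a 0`; induction on `b` concludes.
-/

open LieAlgebra LieAlgebra.SpecialLinear

attribute [local instance 100] LieRing.ofAssociativeRing

section Heisenberg

variable {R : Type*} [Ring R] {x y : R}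

theorem lie_pow_succ_of_commute (h : Commute y ⁅x, y⁆) (m : ℕ) :
    ⁅x, y ^ (m + 1)⁆ = (m + 1) • (y ^ m * ⁅x, y⁆) := by
  induction m with
  | zero => simp
  | succ m ih =>
    calc ⁅x, y ^ (m + 2)⁆ = ⁅x, y ^ (m + 1)⁆ * y + y ^ (m + 1) * ⁅x, y⁆ := by
          simp only [Ring.lie_def, pow_succ _ (m + 1)]; noncomm_ring
      _ = (m + 2) • (y ^ (m + 1) * ⁅x, y⁆) := by
          rw [ih, smul_mul_assoc, mul_assoc, ← h.eq, ← mul_assoc, ← pow_succ]; module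

theorem pow_succ_lie_of_commute (h : Commute x ⁅x, y⁆) (m : ℕ) :
    ⁅x ^ (m + 1), y⁆ = (m + 1) • (x ^ m * ⁅x, y⁆) := by
  have h' : Commute x ⁅y, x⁆ := by rw [← lie_skew]; exact h.neg_right
  rw [← lie_skew, lie_pow_succ_of_commute h', ← lie_skew, mul_neg, smul_neg, neg_neg]

theorem pow_mul_pow_add_mul_pow_eq (hx : Commute x ⁅x, y⁆) (hy : Commute y ⁅x, y⁆)
    (a b : ℕ) : x ^ a * y ^ (a + b) * x ^ b = y ^ b * x ^ (a + b) * y ^ a := by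
  induction b generalizing a with
  | zero => simp
  | succ b ih =>
    have hL : x ^ a * y ^ (a + (b + 1)) * x ^ (b + 1) = x ^ (a + 1) * y ^ (a + 1 + b) * x ^ b
        - (a + b + 1) • (x ^ a * y ^ (a + b) * x ^ b * ⁅x, y⁆) := by
      have hyx : y ^ (a + b + 1) * x
          = x * y ^ (a + b + 1) - (a + b + 1) • (y ^ (a + b) * ⁅x, y⁆) := by
        rw [← lie_pow_succ_of_commute hy, Ring.lie_def, sub_sub_cancel]
      calc x ^ a * y ^ (a + (b + 1)) * x ^ (b + 1) = x ^ a * (y ^ (a + b + 1) * x) * x ^ b := by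
            rw [← add_assoc, pow_succ' x b]; simp only [mul_assoc]
        _ = x ^ (a + 1) * y ^ (a + 1 + b) * x ^ b
            - (a + b + 1) • (x ^ a * y ^ (a + b) * (⁅x, y⁆ * x ^ b)) := by
            rw [hyx, add_right_comm a 1 b, pow_succ x a]
            simp only [mul_sub, sub_mul, mul_smul_comm, smul_mul_assoc, mul_assoc]
        _ = _ := by rw [← (hx.pow_left b).eq]; simp only [mul_assoc]
    have hR : y ^ (b + 1) * x ^ (a + (b + 1)) * y ^ a = y ^ b * x ^ (a + 1 + b) * y ^ (a + 1)
        - (a + b + 1) • (y ^ b * x ^ (a + b) * y ^ a * ⁅x, y⁆) := by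
      have hxy : y * x ^ (a + b + 1)
          = x ^ (a + b + 1) * y - (a + b + 1) • (x ^ (a + b) * ⁅x, y⁆) := by
        rw [← pow_succ_lie_of_commute hx, Ring.lie_def, sub_sub_cancel]
      calc y ^ (b + 1) * x ^ (a + (b + 1)) * y ^ a = y ^ b * (y * x ^ (a + b + 1)) * y ^ a := by
            rw [← add_assoc, pow_succ y b]; simp only [mul_assoc]
        _ = y ^ b * x ^ (a + 1 + b) * y ^ (a + 1)
            - (a + b + 1) • (y ^ b * x ^ (a + b) * (⁅x, y⁆ * y ^ a)) := by
            rw [hxy, add_right_comm a 1 b, pow_succ' y a]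
            simp only [mul_sub, sub_mul, mul_smul_comm, smul_mul_assoc, mul_assoc]
        _ = _ := by rw [← (hy.pow_left a).eq]; simp only [mul_assoc]
    rw [hL, hR, ih, ih]

end Heisenberg

theorem UniversalEnvelopingAlgebra.ι_pow_mul_pow_add_mul_pow {R L : Type*} [CommRing R]
    [LieRing L] [LieAlgebra R L] {e f : L} (he : ⁅e, ⁅e, f⁆⁆ = 0) (hf : ⁅f, ⁅e, f⁆⁆ = 0)
    (a b : ℕ) :
    ι R e ^ a * ι R f ^ (a + b) * ι R e ^ b = ι R f ^ b * ι R e ^ (a + b) * ι R f ^ a := by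
  refine pow_mul_pow_add_mul_pow_eq ?_ ?_ a b
  · rw [commute_iff_lie_eq, ← LieHom.map_lie, ← LieHom.map_lie, he, map_zero]
  · rw [commute_iff_lie_eq, ← LieHom.map_lie, ← LieHom.map_lie, hf, map_zero]

namespace LieAlgebra.SpecialLinear

variable {ι R : Type*} [Fintype ι] [DecidableEq ι] [CommRing R] {A B C : ι}
  {hBA : B ≠ A} {hCB : C ≠ B} {r s : R}

theorem val_lie_single_single (hAC : A ≠ C) :
    (⁅single B A hBA r, single C B hCB s⁆ : sl ι R).val = -Matrix.single C A (s * r) := by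
  rw [sl_bracket, val_single, val_single, Matrix.single_mul_single_of_ne (h := hAC)]
  simp

theorem lie_single_lie_single_single_left (hAC : A ≠ C) :
    ⁅single B A hBA r, ⁅single B A hBA r, single C B hCB s⁆⁆ = 0 := by
  ext1
  rw [sl_bracket, val_lie_single_single hAC, val_single, neg_mul, mul_neg,
    Matrix.single_mul_single_of_ne (h := hAC), Matrix.single_mul_single_of_ne (h := hBA.symm),
    neg_zero, sub_zero, ZeroMemClass.coe_zero]

theorem lie_single_lie_single_single_right (hAC : A ≠ C) :
    ⁅single C B hCB s, ⁅single B A hBA r, single C B hCB s⁆⁆ = 0 := by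
  ext1
  rw [sl_bracket, val_lie_single_single hAC, val_single, neg_mul, mul_neg,
    Matrix.single_mul_single_of_ne (h := hCB.symm), Matrix.single_mul_single_of_ne (h := hAC),
    neg_zero, sub_zero, ZeroMemClass.coe_zero]

end LieAlgebra.SpecialLinear

theorem slE_eq_single {n i j : ℕ} (h : i ≠ j ∧ 1 ≤ i ∧ i ≤ n ∧ 1 ≤ j ∧ j ≤ n) :
    slE n i j =
      single ⟨i - 1, by omega⟩ ⟨j - 1, by omega⟩ (by simp [Fin.ext_iff]; omega) 1 :=
  dif_pos h

theorem statement9_general (n : ℕ) (i : ℕ) (hi1 : 1 ≤ i) (hi2 : i ≤ n - 2) (a b : ℕ) :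
    (UniversalEnvelopingAlgebra.ι ℂ (slE n (i+1) i)) ^ a
        * (UniversalEnvelopingAlgebra.ι ℂ (slE n (i+2) (i+1))) ^ (a + b)
        * (UniversalEnvelopingAlgebra.ι ℂ (slE n (i+1) i)) ^ b
      = (UniversalEnvelopingAlgebra.ι ℂ (slE n (i+2) (i+1))) ^ b
        * (UniversalEnvelopingAlgebra.ι ℂ (slE n (i+1) i)) ^ (a + b)
        * (UniversalEnvelopingAlgebra.ι ℂ (slE n (i+2) (i+1))) ^ a := by
  have hAC : (⟨i - 1, by omega⟩ : Fin n) ≠ ⟨i + 2 - 1, by omega⟩ := by simp [Fin.ext_iff]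
  rw [slE_eq_single (by omega), slE_eq_single (by omega)]
  exact UniversalEnvelopingAlgebra.ι_pow_mul_pow_add_mul_pow
    (lie_single_lie_single_single_left hAC)
    (lie_single_lie_single_single_right hAC) a b

/-- Exchange relation in `U(sl(n,ℂ))`: for `1 ≤ i ≤ n−2` and `a, b ∈ ℕ`,
`ι(E_{i+1,i})^a ι(E_{i+2,i+1})^{a+b} ι(E_{i+1,i})^b
  = ι(E_{i+2,i+1})^b ι(E_{i+1,i})^{a+b} ι(E_{i+2,i+1})^a`. -/
theorem statement9 (n : ℕ) (hn : 3 ≤ n) (i : ℕ) (hi1 : 1 ≤ i) (hi2 : i ≤ n - 2) (a b : ℕ) :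
    (UniversalEnvelopingAlgebra.ι ℂ (slE n (i+1) i)) ^ a
        * (UniversalEnvelopingAlgebra.ι ℂ (slE n (i+2) (i+1))) ^ (a + b)
        * (UniversalEnvelopingAlgebra.ι ℂ (slE n (i+1) i)) ^ b
      = (UniversalEnvelopingAlgebra.ι ℂ (slE n (i+2) (i+1))) ^ b
        * (UniversalEnvelopingAlgebra.ι ℂ (slE n (i+1) i)) ^ (a + b)
        * (UniversalEnvelopingAlgebra.ι ℂ (slE n (i+2) (i+1))) ^ a :=
  statement9_general n i hi1 hi2 a b
end

section
/- Let n = 3, let λ_1, λ_2 be complex numbers with λ_1 + λ_2 + 1 ∈ ℕ, and set A = λ_1 + λ_2 + 2. Then the polynomial z = Σ_{p=0}^{A} (⟨λ_1+1⟩_p · ⟨A⟩_p / p!) · x_{2,1}^{A−p} · x_{3,1}^{p} · x_{3,2}^{A−p} in ℂ[x_{2,1}, x_{3,1}, x_{3,2}], where ⟨μ⟩_p = μ(μ−1)⋯(μ−p+1) and ⟨μ⟩_0 = 1, satisfies d_1(z) = 0 and d_2(z) = 0. -/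
open MvPolynomial

/-- The polynomial ring `ℂ[x_{2,1}, x_{3,1}, x_{3,2}]`, with variables indexed by
`0 ↦ x_{2,1}`, `1 ↦ x_{3,1}`, `2 ↦ x_{3,2}`. -/
abbrev A3 := MvPolynomial (Fin 3) ℂ

/-- Multiplication by `x_{2,1}`. -/
noncomputable def m21 : Module.End ℂ A3 := LinearMap.mulLeft ℂ (X 0)
/-- Multiplication by `x_{3,1}`. -/
noncomputable def m31 : Module.End ℂ A3 := LinearMap.mulLeft ℂ (X 1)
/-- Multiplication by `x_{3,2}`. -/
noncomputable def m32 : Module.End ℂ A3 := LinearMap.mulLeft ℂ (X 2)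
/-- `∂_{2,1}`. -/
noncomputable def p21 : Module.End ℂ A3 := (pderiv (0 : Fin 3)).toLinearMap
/-- `∂_{3,1}`. -/
noncomputable def p31 : Module.End ℂ A3 := (pderiv (1 : Fin 3)).toLinearMap
/-- `∂_{3,2}`. -/
noncomputable def p32 : Module.End ℂ A3 := (pderiv (2 : Fin 3)).toLinearMap

/-- `d_1 = (λ_1 − x_{2,1}∂_{2,1} − x_{3,1}∂_{3,1} + x_{3,2}∂_{3,2})∘∂_{2,1} − x_{3,2}∂_{3,1}`. -/
noncomputable def d1 (l1 : ℂ) : Module.End ℂ A3 :=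
  (l1 • (1 : Module.End ℂ A3) - m21 * p21 - m31 * p31 + m32 * p32) * p21 - m32 * p31

/-- `d_2 = (λ_2 − x_{3,2}∂_{3,2})∘∂_{3,2} + x_{2,1}∂_{3,1}`. -/
noncomputable def d2 (l2 : ℂ) : Module.End ℂ A3 :=
  (l2 • (1 : Module.End ℂ A3) - m32 * p32) * p32 + m21 * p31

/-- The falling factorial `⟨μ⟩_p = μ(μ−1)⋯(μ−p+1)`, with `⟨μ⟩_0 = 1`. -/
noncomputable def descFact (mu : ℂ) (p : ℕ) : ℂ := ∏ r ∈ Finset.range p, (mu - r)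

/-!
Both `d₁` and `d₂` send a monomial `x₂₁^a x₃₁^b x₃₂^c` to a combination of two monomials. In `z`,
the second monomial produced by the summand `p + 1` is the first one produced by the summand `p`,
and their coefficients cancel by the recurrence
`c_{p+1} (p + 1) = c_p (λ₁ + 1 - p) (λ₁ + λ₂ + 2 - p)` together with `λ₁ + λ₂ + 2 = N + 1`.
-/

noncomputable def mono3 (a b c : ℕ) : ℂ →ₗ[ℂ] A3 :=
  monomial (Finsupp.single 0 a + Finsupp.single 1 b + Finsupp.single 2 c)

section mono3

variable (a b c : ℕ) (k : ℂ)

lemma C_mul_X_pow_mul_X_pow_mul_X_pow :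
    C k * (X 0 : A3) ^ a * X 1 ^ b * X 2 ^ c = mono3 a b c k := by
  simp [mono3, X_pow_eq_monomial, C_mul_monomial, monomial_mul]

-- The truncated `a - 1` at `a = 0` is harmless: the coefficient `k * a` vanishes there.
lemma p21_mono3 : p21 (mono3 a b c k) = mono3 (a - 1) b c (k * a) := by
  simp only [p21, mono3, Derivation.coeFn_coe, pderiv_monomial]
  congr 2
  · ext i; fin_cases i <;> simp
  · simp

lemma p31_mono3 : p31 (mono3 a b c k) = mono3 a (b - 1) c (k * b) := by
  simp only [p31, mono3, Derivation.coeFn_coe, pderiv_monomial]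
  congr 2
  · ext i; fin_cases i <;> simp
  · simp

lemma p32_mono3 : p32 (mono3 a b c k) = mono3 a b (c - 1) (k * c) := by
  simp only [p32, mono3, Derivation.coeFn_coe, pderiv_monomial]
  congr 2
  · ext i; fin_cases i <;> simp
  · simp

lemma m21_mono3 : m21 (mono3 a b c k) = mono3 (a + 1) b c k := by
  simp only [m21, mono3, LinearMap.mulLeft_apply, X, monomial_mul, one_mul, Finsupp.single_add]
  congr 2; abel

lemma m31_mono3 : m31 (mono3 a b c k) = mono3 a (b + 1) c k := by
  simp only [m31, mono3, LinearMap.mulLeft_apply, X, monomial_mul, one_mul, Finsupp.single_add]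
  congr 2; abel

lemma m32_mono3 : m32 (mono3 a b c k) = mono3 a b (c + 1) k := by
  simp only [m32, mono3, LinearMap.mulLeft_apply, X, monomial_mul, one_mul, Finsupp.single_add]
  congr 2; abel

lemma m21_p21_mono3 : m21 (p21 (mono3 a b c k)) = mono3 a b c (k * a) := by
  rcases a with _ | a <;> simp [p21_mono3, m21_mono3]

lemma m31_p31_mono3 : m31 (p31 (mono3 a b c k)) = mono3 a b c (k * b) := by
  rcases b with _ | b <;> simp [p31_mono3, m31_mono3]

lemma m32_p32_mono3 : m32 (p32 (mono3 a b c k)) = mono3 a b c (k * c) := by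
  rcases c with _ | c <;> simp [p32_mono3, m32_mono3]

lemma weight1_mono3 (l : ℂ) :
    (l • (1 : Module.End ℂ A3) - m21 * p21 - m31 * p31 + m32 * p32) (mono3 a b c k) =
      mono3 a b c (k * (l - a - b + c)) := by
  simp only [LinearMap.sub_apply, LinearMap.add_apply, LinearMap.smul_apply, Module.End.mul_apply,
    Module.End.one_apply, m21_p21_mono3, m31_p31_mono3, m32_p32_mono3, ← map_smul, ← map_sub,
    ← map_add]
  congr 1; simp only [smul_eq_mul]; ring

lemma weight2_mono3 (l : ℂ) :
    (l • (1 : Module.End ℂ A3) - m32 * p32) (mono3 a b c k) = mono3 a b c (k * (l - c)) := by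
  simp only [LinearMap.sub_apply, LinearMap.smul_apply, Module.End.mul_apply,
    Module.End.one_apply, m32_p32_mono3, ← map_smul, ← map_sub]
  congr 1; simp only [smul_eq_mul]; ring

lemma d1_mono3 (l1 : ℂ) :
    d1 l1 (mono3 a b c k) =
      mono3 (a - 1) b c (k * a * (l1 - a + 1 - b + c)) - mono3 a (b - 1) (c + 1) (k * b) := by
  rw [d1, LinearMap.sub_apply, Module.End.mul_apply, Module.End.mul_apply, p21_mono3,
    weight1_mono3, p31_mono3, m32_mono3]
  congr 2
  rcases a with _ | a <;> push_cast [add_tsub_cancel_right] <;> ring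

lemma d2_mono3 (l2 : ℂ) :
    d2 l2 (mono3 a b c k) =
      mono3 a b (c - 1) (k * c * (l2 - c + 1)) + mono3 (a + 1) (b - 1) c (k * b) := by
  rw [d2, LinearMap.add_apply, Module.End.mul_apply, Module.End.mul_apply, p32_mono3,
    weight2_mono3, p31_mono3, m21_mono3]
  congr 2
  rcases c with _ | c <;> push_cast [add_tsub_cancel_right] <;> ring

end mono3

lemma sum_range_succ_add_eq_zero {M : Type*} [AddCommMonoid M] (F G : ℕ → M) (n : ℕ)
    (hF : F n = 0) (hG : G 0 = 0) (hFG : ∀ p < n, F p + G (p + 1) = 0) :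
    ∑ p ∈ Finset.range (n + 1), (F p + G p) = 0 := by
  rw [Finset.sum_add_distrib, Finset.sum_range_succ, Finset.sum_range_succ', hF, hG, add_zero,
    add_zero, ← Finset.sum_add_distrib]
  exact Finset.sum_eq_zero fun p hp => hFG p (Finset.mem_range.1 hp)

lemma descFact_succ (mu : ℂ) (p : ℕ) : descFact mu (p + 1) = descFact mu p * (mu - p) :=
  Finset.prod_range_succ _ _

noncomputable def singularCoeff (l1 l2 : ℂ) (p : ℕ) : ℂ :=
  descFact (l1 + 1) p * descFact (l1 + l2 + 2) p / (Nat.factorial p : ℂ)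

lemma singularCoeff_succ_mul (l1 l2 : ℂ) (p : ℕ) :
    singularCoeff l1 l2 (p + 1) * (p + 1) =
      singularCoeff l1 l2 p * (l1 + 1 - p) * (l1 + l2 + 2 - p) := by
  have hp : (p : ℂ) + 1 ≠ 0 := Nat.cast_add_one_ne_zero p
  rw [singularCoeff, singularCoeff, descFact_succ, descFact_succ, Nat.factorial_succ,
    Nat.cast_mul, Nat.cast_succ]
  field_simp

noncomputable def singularVector (l1 l2 : ℂ) (M : ℕ) : A3 :=
  ∑ p ∈ Finset.range (M + 1), mono3 (M - p) p (M - p) (singularCoeff l1 l2 p)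

lemma d1_singularVector {l1 l2 : ℂ} {M : ℕ} (hM : l1 + l2 + 2 = M) :
    d1 l1 (singularVector l1 l2 M) = 0 := by
  simp only [singularVector, map_sum, d1_mono3, sub_eq_add_neg]
  apply sum_range_succ_add_eq_zero
  · simp
  · simp
  · intro p hp
    obtain ⟨q, rfl⟩ : ∃ q, M = p + 1 + q := ⟨M - (p + 1), by omega⟩
    have hq : p + 1 + q - p = q + 1 := by omega
    have hq' : p + 1 + q - (p + 1) = q := by omega
    rw [hq, hq', add_tsub_cancel_right, add_tsub_cancel_right, ← map_neg, ← map_add]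
    convert map_zero (mono3 q p (q + 1))
    push_cast at hM ⊢
    linear_combination
      -singularCoeff_succ_mul l1 l2 p - singularCoeff l1 l2 p * (l1 + 1 - p) * hM

lemma d2_singularVector {l1 l2 : ℂ} {M : ℕ} (hM : l1 + l2 + 2 = M) :
    d2 l2 (singularVector l1 l2 M) = 0 := by
  simp only [singularVector, map_sum, d2_mono3]
  apply sum_range_succ_add_eq_zero
  · simp
  · simp
  · intro p hp
    obtain ⟨q, rfl⟩ : ∃ q, M = p + 1 + q := ⟨M - (p + 1), by omega⟩
    have hq : p + 1 + q - p = q + 1 := by omega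
    have hq' : p + 1 + q - (p + 1) = q := by omega
    rw [hq, hq', add_tsub_cancel_right, add_tsub_cancel_right, ← map_add]
    convert map_zero (mono3 (q + 1) p q)
    push_cast at hM ⊢
    linear_combination
      singularCoeff_succ_mul l1 l2 p + singularCoeff l1 l2 p * (l1 + 2 + q - p) * hM

/-- For `λ_1 + λ_2 + 1 ∈ ℕ` and `A = λ_1 + λ_2 + 2`, the polynomial
`z = Σ_{p=0}^{A} (⟨λ_1+1⟩_p ⟨A⟩_p / p!) x_{2,1}^{A−p} x_{3,1}^p x_{3,2}^{A−p}`
satisfies `d_1(z) = 0` and `d_2(z) = 0`. -/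
theorem statement17 (l1 l2 : ℂ) (N : ℕ) (h : l1 + l2 + 1 = (N : ℂ)) :
    d1 l1 (∑ p ∈ Finset.range (N + 1 + 1),
        C (descFact (l1 + 1) p * descFact (l1 + l2 + 2) p / (Nat.factorial p : ℂ)) *
          X 0 ^ (N + 1 - p) * X 1 ^ p * X 2 ^ (N + 1 - p)) = 0 ∧
    d2 l2 (∑ p ∈ Finset.range (N + 1 + 1),
        C (descFact (l1 + 1) p * descFact (l1 + l2 + 2) p / (Nat.factorial p : ℂ)) *
          X 0 ^ (N + 1 - p) * X 1 ^ p * X 2 ^ (N + 1 - p)) = 0 := by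
  have hM : l1 + l2 + 2 = ((N + 1 : ℕ) : ℂ) := by
    push_cast
    linear_combination h
  simp only [C_mul_X_pow_mul_X_pow_mul_X_pow]
  exact ⟨d1_singularVector hM, d2_singularVector hM⟩
end
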